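/- arXiv:2006.11475 — 4 statements merged into one kernel-verified Lean document; each statement's English description precedes it below -/
import Mathlib

section
/- For every n ∈ ℕ, all zeros of the polynomial V_n(z) = ∑_{m=0}^{n} U_m(z) lie in the real interval (−1, 1). -/
/-!
Write `z = (x + y) / 2` with `x * y = 1`. Then `(x - y) * U_m(z) = x ^ (m + 1) - y ^ (m + 1)`, and
telescoping the recurrence gives `2 (z - 1) V_n = U_{n+1} - U_n - 1`; together,
`x ^ (n + 2) (x - y) 2 (z - 1) V_n(z) = (x - 1) (x ^ (n + 1) - 1) (x ^ (n + 2) - 1)`.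
So a zero `z` of `V_n` comes from `x = 1` or from a root of unity `x`, whence `z = Re x ∈ [-1, 1]`;
the endpoints are excluded because `V_n(±1) ≠ 0`.
-/

open Polynomial

namespace Polynomial.Chebyshev

variable {R : Type*} [CommRing R]

theorem sub_mul_U_eval_eq_pow_sub_pow {x y z : R} (hxy : x * y = 1) (hz : x + y = 2 * z) :
    ∀ n : ℕ, (x - y) * (U R n).eval z = x ^ (n + 1) - y ^ (n + 1)
  | 0 => by simp
  | 1 => by
    simp only [Nat.cast_one, U_one, eval_mul, eval_ofNat, eval_X]
    linear_combination -(x - y) * hz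
  | n + 2 => by
    have h := U_add_two R n
    push_cast at h ⊢
    rw [h]
    simp only [eval_sub, eval_mul, eval_ofNat, eval_X]
    have h1 := sub_mul_U_eval_eq_pow_sub_pow hxy hz (n + 1)
    have h0 := sub_mul_U_eval_eq_pow_sub_pow hxy hz n
    push_cast at h1
    linear_combination 2 * z * h1 - h0 - (x ^ (n + 2) - y ^ (n + 2)) * hz
      + (x ^ (n + 1) - y ^ (n + 1)) * hxy

variable (R) in
theorem two_mul_X_sub_one_mul_sum_U (n : ℕ) :
    2 * (X - 1) * ∑ m ∈ Finset.range (n + 1), U R m = U R (n + 1) - U R n - 1 := by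
  induction n with
  | zero => simp [U_one]; ring
  | succ n ih =>
    rw [Finset.sum_range_succ, mul_add, ih]
    have h := U_add_two R n
    rw [show (n : ℤ) + 2 = n + 1 + 1 by ring] at h
    push_cast
    linear_combination -h

theorem pow_mul_sub_mul_two_mul_sub_one_mul_sum_U_eval {x y z : R} (hxy : x * y = 1)
    (hz : x + y = 2 * z) (n : ℕ) :
    x ^ (n + 2) * (x - y) * (2 * (z - 1) * (∑ m ∈ Finset.range (n + 1), U R m).eval z) =
      (x - 1) * (x ^ (n + 1) - 1) * (x ^ (n + 2) - 1) := by
  have hV := congrArg (eval z) (two_mul_X_sub_one_mul_sum_U R n)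
  simp only [eval_mul, eval_sub, eval_ofNat, eval_X, eval_one] at hV
  have h1 := sub_mul_U_eval_eq_pow_sub_pow hxy hz (n + 1)
  have h0 := sub_mul_U_eval_eq_pow_sub_pow hxy hz n
  push_cast at h1
  have hpow1 : (x * y) ^ (n + 1) = 1 := by rw [hxy, one_pow]
  have hpow2 : (x * y) ^ (n + 2) = 1 := by rw [hxy, one_pow]
  linear_combination x ^ (n + 2) * (x - y) * hV + x ^ (n + 2) * h1 - x ^ (n + 2) * h0
    + x ^ (n + 1) * hxy + x * hpow1 - hpow2

theorem eq_one_or_pow_eq_one_of_sum_U_eval_eq_zero [IsDomain R] {x y z : R} (hxy : x * y = 1)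
    (hz : x + y = 2 * z) {n : ℕ} (hV : (∑ m ∈ Finset.range (n + 1), U R m).eval z = 0) :
    x = 1 ∨ x ^ (n + 1) = 1 ∨ x ^ (n + 2) = 1 := by
  have h := pow_mul_sub_mul_two_mul_sub_one_mul_sum_U_eval hxy hz n
  rw [hV, mul_zero, mul_zero, eq_comm] at h
  simpa only [mul_eq_zero, sub_eq_zero, or_assoc] using h

variable [CharZero R]

theorem sum_U_eval_one_ne_zero (n : ℕ) : (∑ m ∈ Finset.range (n + 1), U R m).eval 1 ≠ 0 := by
  rw [eval_finsetSum]
  simp only [U_eval_one, Int.cast_natCast]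
  exact_mod_cast (Finset.sum_pos (fun m _ => Nat.succ_pos m) Finset.nonempty_range_add_one).ne'

theorem sum_U_eval_neg_one_ne_zero (n : ℕ) :
    (∑ m ∈ Finset.range (n + 1), U R m).eval (-1) ≠ 0 := by
  intro h
  have hV := congrArg (eval (-1)) (two_mul_X_sub_one_mul_sum_U R n)
  simp only [eval_mul, eval_sub, eval_ofNat, eval_X, eval_one, h, mul_zero] at hV
  rw [← Nat.cast_one (R := ℤ), ← Nat.cast_add, U_eval_neg_one, U_eval_neg_one,
    Int.cast_negOnePow_natCast, Int.cast_negOnePow_natCast] at hV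
  push_cast at hV
  -- `hV` says `(-1) ^ n * (2 * n + 3) = -1`; squaring removes the sign.
  have hsgn : ((-1 : R) ^ n) ^ 2 = 1 := by rw [← pow_mul, pow_mul']; simp
  have hsq : (((2 * n + 3) ^ 2 : ℕ) : R) = ((1 : ℕ) : R) := by
    push_cast
    linear_combination ((-1) ^ n * (2 * n + 3) - 1) * hV - (2 * n + 3) ^ 2 * hsgn
  simpa using Nat.cast_injective hsq

end Polynomial.Chebyshev

theorem IsAlgClosed.exists_mul_eq_one_add_eq_two_mul {K : Type*} [Field K] [IsAlgClosed K]
    (z : K) : ∃ x y : K, x * y = 1 ∧ x + y = 2 * z := by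
  obtain ⟨s, hs⟩ := IsAlgClosed.exists_eq_mul_self (z ^ 2 - 1)
  exact ⟨z + s, z - s, by linear_combination hs, by ring⟩

theorem Complex.add_eq_two_mul_re_of_mul_eq_one {x y : ℂ} (hx : ‖x‖ = 1) (hxy : x * y = 1) :
    x + y = 2 * x.re := by
  rw [eq_inv_of_mul_eq_one_right hxy, Complex.inv_eq_conj hx, Complex.add_conj]
  push_cast
  ring

open Polynomial.Chebyshev in
theorem partial_sum_chebyshevU_zeros_in_interval (n : ℕ) (z : ℂ)
    (hz : (∑ m ∈ Finset.range (n + 1), Polynomial.Chebyshev.U ℂ m).eval z = 0) :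
    ∃ x : ℝ, -1 < x ∧ x < 1 ∧ z = (x : ℂ) := by
  have hz_ne_one : z ≠ 1 := by rintro rfl; exact sum_U_eval_one_ne_zero n hz
  have hz_ne_neg_one : z ≠ -1 := by rintro rfl; exact sum_U_eval_neg_one_ne_zero n hz
  obtain ⟨x, y, hxy, hxyz⟩ := IsAlgClosed.exists_mul_eq_one_add_eq_two_mul z
  have hx : ‖x‖ = 1 := by
    rcases eq_one_or_pow_eq_one_of_sum_U_eval_eq_zero hxy hxyz hz with rfl | h | h
    · rw [one_mul] at hxy
      exact absurd (by linear_combination -hxyz / 2 + hxy / 2) hz_ne_one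
    · exact Complex.norm_eq_one_of_pow_eq_one h n.succ_ne_zero
    · exact Complex.norm_eq_one_of_pow_eq_one h (n + 1).succ_ne_zero
  have hzx : z = x.re := by
    linear_combination (Complex.add_eq_two_mul_re_of_mul_eq_one hx hxy - hxyz) / 2
  have hre : |x.re| ≤ 1 := hx ▸ Complex.abs_re_le_norm x
  refine ⟨x.re, (abs_le.1 hre).1.lt_of_ne ?_, (abs_le.1 hre).2.lt_of_ne ?_, hzx⟩
  · exact fun h => hz_ne_neg_one (by rw [hzx, ← h]; push_cast; ring)
  · exact fun h => hz_ne_one (by rw [hzx, h]; push_cast; ring)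
end

section
/- Let 0 < α < 1 and θ ∈ (0, π). Then −1/((1−e^{−iθ})^α (e^{−iθ}−e^{iθ}) e^{−i(m+1)θ}) − 1/((1−e^{iθ})^α (e^{iθ}−e^{−iθ}) e^{i(m+1)θ}) = (sin^α(θ/2) / (sin θ · (1−cos θ)^α)) · sin((m+1)θ + α(θ−π)/2), where the power w^α uses the principal branch. -/
/-!
Writing `1 - e^{iθ} = 2 sin(θ/2) e^{i(θ-π)/2}` with argument `(θ-π)/2 ∈ (-π, π)`, the principal
powers are `(1 - e^{±iθ})^α = (2 sin(θ/2))^α e^{±iα(θ-π)/2}`. Since `e^{iθ} - e^{-iθ} = 2i sin θ`,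
the two terms then combine into `(2 sin(θ/2))^{-α} sin((m+1)θ + α(θ-π)/2) / sin θ`, and
`1 - cos θ = 2 sin²(θ/2)` turns the prefactor into the stated one.
-/

open Real Complex

theorem Complex.one_sub_exp_mul_I (θ : ℝ) :
    1 - exp (θ * I) = ((2 * Real.sin (θ / 2) : ℝ) : ℂ) * exp (((θ - π) / 2 : ℝ) * I) := by
  have hθ : θ = 2 * (θ / 2) := by ring
  have hφ : (θ - π) / 2 = θ / 2 - π / 2 := by ring
  rw [exp_mul_I, exp_mul_I, ← ofReal_cos, ← ofReal_sin, ← ofReal_cos, ← ofReal_sin, hφ,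
    Real.cos_sub_pi_div_two, Real.sin_sub_pi_div_two, hθ, Real.cos_two_mul_eq_one_sub,
    Real.sin_two_mul]
  push_cast
  ring_nf

theorem Complex.one_sub_exp_neg_mul_I (θ : ℝ) :
    1 - exp (-(θ * I)) = ((2 * Real.sin (θ / 2) : ℝ) : ℂ) * exp (-(((θ - π) / 2 : ℝ) * I)) := by
  have h := congrArg (starRingEnd ℂ) (one_sub_exp_mul_I θ)
  simp only [map_sub, map_one, map_mul, ← exp_conj, conj_ofReal, conj_I, mul_neg] at h
  exact h

theorem Complex.ofReal_mul_exp_mul_I_cpow {r φ : ℝ} (hr : 0 < r) (hφ₁ : -π < φ) (hφ₂ : φ ≤ π)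
    (α : ℝ) : ((r : ℂ) * exp (φ * I)) ^ (α : ℂ) = ((r ^ α : ℝ) : ℂ) * exp ((α * φ : ℝ) * I) := by
  have hlog : log (exp (φ * I)) = φ * I := log_exp (by simpa using hφ₁) (by simpa using hφ₂)
  rw [cpow_def_of_ne_zero (mul_ne_zero (ofReal_ne_zero.2 hr.ne') (exp_ne_zero _)),
    log_ofReal_mul hr (exp_ne_zero _), hlog, Real.rpow_def_of_pos hr, ofReal_exp, ← exp_add]
  push_cast
  ring_nf

theorem Complex.exp_mul_I_sub_exp_neg_mul_I (x : ℂ) :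
    exp (x * I) - exp (-(x * I)) = 2 * I * sin x := by
  rw [sin, neg_mul]
  ring_nf
  rw [I_sq]
  ring

section OneSubExpCpow

variable {θ : ℝ} (hθ : θ ∈ Set.Ioo 0 (2 * π))
include hθ

theorem Real.sin_half_pos : 0 < Real.sin (θ / 2) :=
  Real.sin_pos_of_pos_of_lt_pi (by linarith [hθ.1]) (by linarith [hθ.2])

theorem Complex.one_sub_exp_mul_I_cpow (α : ℝ) :
    (1 - exp (θ * I)) ^ (α : ℂ)
      = (((2 * Real.sin (θ / 2)) ^ α : ℝ) : ℂ) * exp ((α * ((θ - π) / 2) : ℝ) * I) := by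
  have hr : 0 < 2 * Real.sin (θ / 2) := mul_pos two_pos (Real.sin_half_pos hθ)
  rw [one_sub_exp_mul_I,
    ofReal_mul_exp_mul_I_cpow hr (by linarith [hθ.1, pi_pos]) (by linarith [hθ.2, pi_pos])]

theorem Complex.one_sub_exp_neg_mul_I_cpow (α : ℝ) :
    (1 - exp (-(θ * I))) ^ (α : ℂ)
      = (((2 * Real.sin (θ / 2)) ^ α : ℝ) : ℂ) * exp (-((α * ((θ - π) / 2) : ℝ) * I)) := by
  have hr : 0 < 2 * Real.sin (θ / 2) := mul_pos two_pos (Real.sin_half_pos hθ)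
  rw [one_sub_exp_neg_mul_I, ← neg_mul, ← ofReal_neg,
    ofReal_mul_exp_mul_I_cpow hr (by linarith [hθ.2, pi_pos]) (by linarith [hθ.1, pi_pos]),
    ← neg_mul, ← ofReal_neg, mul_neg]

end OneSubExpCpow

theorem residue_pair_sum_eq {R θ : ℂ} (hR : R ≠ 0) (hθ : sin θ ≠ 0) (b T : ℂ) :
    -(1 / (R * exp (-(b * I)) * (exp (-(θ * I)) - exp (θ * I)) * exp (-(T * I))))
      - 1 / (R * exp (b * I) * (exp (θ * I) - exp (-(θ * I))) * exp (T * I))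
      = sin (T + b) / (R * sin θ) := by
  rw [← neg_sub (exp (θ * I)), exp_mul_I_sub_exp_neg_mul_I]
  have hsum := exp_mul_I_sub_exp_neg_mul_I (T + b)
  rw [add_mul, neg_add, Complex.exp_add, Complex.exp_add] at hsum
  rw [Complex.exp_neg (b * I), Complex.exp_neg (T * I)] at hsum ⊢
  have hu : exp (b * I) ≠ 0 := exp_ne_zero _
  have hv : exp (T * I) ≠ 0 := exp_ne_zero _
  generalize exp (b * I) = u at *
  generalize exp (T * I) = v at *
  field_simp at hsum ⊢
  linear_combination hsum

theorem Real.sin_half_rpow_div_one_sub_cos_rpow {θ : ℝ} (hs : 0 < Real.sin (θ / 2)) (α : ℝ) :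
    Real.sin (θ / 2) ^ α / (1 - Real.cos θ) ^ α = ((2 * Real.sin (θ / 2)) ^ α)⁻¹ := by
  have h : 1 - Real.cos θ = 2 * Real.sin (θ / 2) * Real.sin (θ / 2) := by
    have := Real.cos_two_mul_eq_one_sub (θ / 2)
    rw [mul_div_cancel₀ θ two_ne_zero] at this
    linear_combination -this
  rw [h, Real.mul_rpow (by positivity) hs.le]
  field_simp

theorem residue_sum_formula_general (α θ : ℝ) (hθ : θ ∈ Set.Ioo 0 π) (m : ℕ) :
    -(1 / ((1 - Complex.exp (-(Complex.I * θ))) ^ (α : ℂ)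
          * (Complex.exp (-(Complex.I * θ)) - Complex.exp (Complex.I * θ))
          * Complex.exp (-(Complex.I * ((m + 1) * θ)))))
      - 1 / ((1 - Complex.exp (Complex.I * θ)) ^ (α : ℂ)
          * (Complex.exp (Complex.I * θ) - Complex.exp (-(Complex.I * θ)))
          * Complex.exp (Complex.I * ((m + 1) * θ)))
      = ((Real.sin (θ / 2) ^ α / (Real.sin θ * (1 - Real.cos θ) ^ α)
          * Real.sin ((m + 1) * θ + α * (θ - π) / 2) : ℝ) : ℂ) := by
  have hθ' : θ ∈ Set.Ioo 0 (2 * π) := ⟨hθ.1, by linarith [hθ.2, pi_pos]⟩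
  have hsin : Real.sin θ ≠ 0 := (Real.sin_pos_of_mem_Ioo hθ).ne'
  have hR : (((2 * Real.sin (θ / 2)) ^ α : ℝ) : ℂ) ≠ 0 := by
    exact_mod_cast (Real.rpow_pos_of_pos (mul_pos two_pos (Real.sin_half_pos hθ')) α).ne'
  have hcoef : Real.sin (θ / 2) ^ α / (Real.sin θ * (1 - Real.cos θ) ^ α)
      = ((2 * Real.sin (θ / 2)) ^ α)⁻¹ / Real.sin θ := by
    rw [mul_comm, ← div_div, Real.sin_half_rpow_div_one_sub_cos_rpow (Real.sin_half_pos hθ')]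
  rw [hcoef]
  simp only [mul_comm I]
  rw [one_sub_exp_mul_I_cpow hθ', one_sub_exp_neg_mul_I_cpow hθ',
    residue_pair_sum_eq hR (by exact_mod_cast hsin)]
  push_cast
  ring_nf

theorem residue_sum_formula (α θ : ℝ) (hα : 0 < α ∧ α < 1) (hθ : θ ∈ Set.Ioo 0 π) (m : ℕ) :
    -(1 / ((1 - Complex.exp (-(Complex.I * θ))) ^ (α : ℂ)
          * (Complex.exp (-(Complex.I * θ)) - Complex.exp (Complex.I * θ))
          * Complex.exp (-(Complex.I * ((m + 1) * θ)))))
      - 1 / ((1 - Complex.exp (Complex.I * θ)) ^ (α : ℂ)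
          * (Complex.exp (Complex.I * θ) - Complex.exp (-(Complex.I * θ)))
          * Complex.exp (Complex.I * ((m + 1) * θ)))
      = ((Real.sin (θ / 2) ^ α / (Real.sin θ * (1 - Real.cos θ) ^ α)
          * Real.sin ((m + 1) * θ + α * (θ - π) / 2) : ℝ) : ℂ) :=
  residue_sum_formula_general α θ hθ m
end

section
/- Let 0 < α < 1. There exist constants K > 0 and M ∈ ℕ such that for all m ≥ M and all θ ∈ (K/m, π), (1/π) ∫_0^∞ dx / (x^α ((1+x)² − 2(1+x)cos θ + 1)(1+x)^{m+1}) < sin^α(θ/2) / (sin θ · (1−cos θ)^α). -/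
/-!
The denominator `(1 + x)² - 2(1 + x) cos θ + 1 = x² + 2(1 + x)(1 - cos θ)` is at least
`2(1 - cos θ)`, so the integral is at most `(2(1 - cos θ))⁻¹ ∫₀^∞ x^(-α) (1 + x)^(-(m+1)) dx`.
Splitting this last integral at `x = 1/m` bounds it by `C m^(α-1)` with `C = 1/(1-α) + 1`.
On the other side, `2(1 - cos θ)` times the right-hand side equals `(2 sin(θ/2))^(1-α) / cos(θ/2)`,
which by Jordan's inequality `θ ≤ π sin(θ/2)` is at least `θ^(1-α) / π`; and `θ^(1-α) > C m^(α-1)`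
as soon as `θ > C^(1/(1-α)) / m`.
-/

open Real MeasureTheory Set Filter Topology

section Tail

variable {n : ℕ} {c : ℝ}

lemma hasDerivAt_neg_inv_one_add_pow_div (hn : n ≠ 0) {x : ℝ} (hx : -1 < x) :
    HasDerivAt (fun y : ℝ => -((1 + y) ^ n)⁻¹ / n) ((1 + x) ^ (n + 1))⁻¹ x := by
  have h := (((hasDerivAt_id' x).const_add 1).fun_pow n).inv (pow_ne_zero n (by linarith))
  refine (h.neg.div_const (n : ℝ)).congr_deriv ?_
  obtain ⟨k, rfl⟩ := Nat.exists_eq_succ_of_ne_zero hn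
  simp only [Nat.succ_sub_one, Nat.cast_succ, mul_one, pow_succ]
  field_simp

lemma tendsto_neg_inv_one_add_pow_div (hn : n ≠ 0) :
    Tendsto (fun y : ℝ => -((1 + y) ^ n)⁻¹ / n) atTop (𝓝 0) := by
  have h : Tendsto (fun y : ℝ => (1 + y) ^ n) atTop atTop :=
    (tendsto_pow_atTop hn).comp (tendsto_atTop_add_const_left _ 1 tendsto_id)
  simpa using h.inv_tendsto_atTop.neg.div_const (n : ℝ)

lemma integrableOn_Ioi_inv_one_add_pow (hn : n ≠ 0) (hc : -1 < c) :
    IntegrableOn (fun x : ℝ => ((1 + x) ^ (n + 1))⁻¹) (Ioi c) :=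
  integrableOn_Ioi_deriv_of_nonneg'
    (fun _ hx => hasDerivAt_neg_inv_one_add_pow_div hn (hc.trans_le hx))
    (fun x hx => inv_nonneg.mpr (pow_nonneg (by linarith [mem_Ioi.mp hx]) _))
    (tendsto_neg_inv_one_add_pow_div hn)

lemma integral_Ioi_inv_one_add_pow (hn : n ≠ 0) (hc : -1 < c) :
    ∫ x in Ioi c, ((1 + x) ^ (n + 1))⁻¹ = ((1 + c) ^ n)⁻¹ / n := by
  rw [integral_Ioi_of_hasDerivAt_of_nonneg'
    (fun _ hx => hasDerivAt_neg_inv_one_add_pow_div hn (hc.trans_le hx))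
    (fun x hx => inv_nonneg.mpr (pow_nonneg (by linarith [mem_Ioi.mp hx]) _))
    (tendsto_neg_inv_one_add_pow_div hn)]
  ring

end Tail

section Kernel

variable {α : ℝ} {n : ℕ} {e : ℝ}

lemma integral_Ioc_zero_rpow_neg (hα : α < 1) (he : 0 ≤ e) :
    ∫ x in Ioc 0 e, x ^ (-α) = e ^ (1 - α) / (1 - α) := by
  rw [← intervalIntegral.integral_of_le he, integral_rpow (Or.inl (by linarith)),
    zero_rpow (by linarith), sub_zero, neg_add_eq_sub]

lemma integrableOn_Ioc_zero_rpow_neg (hα : α < 1) (he : 0 ≤ e) :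
    IntegrableOn (fun x : ℝ => x ^ (-α)) (Ioc 0 e) :=
  (intervalIntegrable_iff_integrableOn_Ioc_of_le he).mp
    (intervalIntegral.intervalIntegrable_rpow' (by linarith))

lemma inv_rpow_mul_one_add_pow_le_rpow_neg {x : ℝ} (hx : 0 < x) :
    (x ^ α * (1 + x) ^ n)⁻¹ ≤ x ^ (-α) := by
  rw [rpow_neg hx.le]
  exact inv_anti₀ (by positivity)
    (le_mul_of_one_le_right (by positivity) (one_le_pow₀ (by linarith)))

lemma inv_rpow_mul_one_add_pow_le_of_le (hα : 0 ≤ α) (he : 0 < e) {x : ℝ} (hex : e ≤ x) :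
    (x ^ α * (1 + x) ^ n)⁻¹ ≤ e ^ (-α) * ((1 + x) ^ n)⁻¹ := by
  have : 0 < 1 + x := by linarith
  rw [mul_inv, rpow_neg he.le]
  gcongr

lemma integrableOn_Ioc_zero_inv_rpow_mul_one_add_pow (hα : α < 1) (he : 0 ≤ e) :
    IntegrableOn (fun x : ℝ => (x ^ α * (1 + x) ^ n)⁻¹) (Ioc 0 e) := by
  refine (integrableOn_Ioc_zero_rpow_neg hα he).mono' (by fun_prop) ?_
  filter_upwards [ae_restrict_mem measurableSet_Ioc] with x hx
  have : 0 < x := hx.1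
  rw [norm_of_nonneg (by positivity)]
  exact inv_rpow_mul_one_add_pow_le_rpow_neg hx.1

lemma integral_Ioc_zero_inv_rpow_mul_one_add_pow_le (hα : α < 1) (he : 0 ≤ e) :
    ∫ x in Ioc 0 e, (x ^ α * (1 + x) ^ n)⁻¹ ≤ e ^ (1 - α) / (1 - α) := by
  rw [← integral_Ioc_zero_rpow_neg hα he]
  exact setIntegral_mono_on (integrableOn_Ioc_zero_inv_rpow_mul_one_add_pow hα he)
    (integrableOn_Ioc_zero_rpow_neg hα he) measurableSet_Ioc
    fun x hx => inv_rpow_mul_one_add_pow_le_rpow_neg hx.1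

lemma integrableOn_Ioi_inv_rpow_mul_one_add_pow (hα : 0 ≤ α) (hn : n ≠ 0) (he : 0 < e) :
    IntegrableOn (fun x : ℝ => (x ^ α * (1 + x) ^ (n + 1))⁻¹) (Ioi e) := by
  refine ((integrableOn_Ioi_inv_one_add_pow hn (by linarith)).const_mul (e ^ (-α))).mono'
    (by fun_prop) ?_
  filter_upwards [ae_restrict_mem measurableSet_Ioi] with x hx
  have : 0 < x := he.trans hx
  rw [norm_of_nonneg (by positivity)]
  exact inv_rpow_mul_one_add_pow_le_of_le hα he hx.le

lemma integral_Ioi_inv_rpow_mul_one_add_pow_le (hα : 0 ≤ α) (hn : n ≠ 0) (he : 0 < e) :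
    ∫ x in Ioi e, (x ^ α * (1 + x) ^ (n + 1))⁻¹ ≤ e ^ (-α) / n := by
  calc ∫ x in Ioi e, (x ^ α * (1 + x) ^ (n + 1))⁻¹
      ≤ ∫ x in Ioi e, e ^ (-α) * ((1 + x) ^ (n + 1))⁻¹ :=
        setIntegral_mono_on (integrableOn_Ioi_inv_rpow_mul_one_add_pow hα hn he)
          ((integrableOn_Ioi_inv_one_add_pow hn (by linarith)).const_mul _) measurableSet_Ioi
          fun x hx => inv_rpow_mul_one_add_pow_le_of_le hα he (le_of_lt hx)
    _ = e ^ (-α) * (((1 + e) ^ n)⁻¹ / n) := by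
        rw [integral_const_mul, integral_Ioi_inv_one_add_pow hn (by linarith)]
    _ ≤ e ^ (-α) / n := by
        rw [← mul_div_assoc]
        gcongr
        exact mul_le_of_le_one_right (by positivity)
          (inv_le_one_of_one_le₀ (one_le_pow₀ (by linarith)))

lemma integrableOn_Ioi_zero_inv_rpow_mul_one_add_pow (hα0 : 0 ≤ α) (hα1 : α < 1) (hn : n ≠ 0) :
    IntegrableOn (fun x : ℝ => (x ^ α * (1 + x) ^ (n + 1))⁻¹) (Ioi 0) := by
  rw [← Ioc_union_Ioi_eq_Ioi zero_le_one]
  exact (integrableOn_Ioc_zero_inv_rpow_mul_one_add_pow hα1 zero_le_one).union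
    (integrableOn_Ioi_inv_rpow_mul_one_add_pow hα0 hn one_pos)

lemma integral_Ioi_zero_inv_rpow_mul_one_add_pow_le (hα0 : 0 ≤ α) (hα1 : α < 1) (hn : n ≠ 0) :
    ∫ x in Ioi 0, (x ^ α * (1 + x) ^ (n + 1))⁻¹ ≤ ((1 - α)⁻¹ + 1) * (n : ℝ) ^ (α - 1) := by
  have hn' : (0 : ℝ) < n := by positivity
  have he : (0 : ℝ) < (n : ℝ)⁻¹ := inv_pos.mpr hn'
  rw [← Ioc_union_Ioi_eq_Ioi he.le, setIntegral_union (Ioc_disjoint_Ioi le_rfl) measurableSet_Ioi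
    (integrableOn_Ioc_zero_inv_rpow_mul_one_add_pow hα1 he.le)
    (integrableOn_Ioi_inv_rpow_mul_one_add_pow hα0 hn he)]
  have h_near : (n : ℝ)⁻¹ ^ (1 - α) = (n : ℝ) ^ (α - 1) := by
    rw [inv_rpow hn'.le, ← rpow_neg hn'.le, neg_sub]
  have h_far : (n : ℝ)⁻¹ ^ (-α) / n = (n : ℝ) ^ (α - 1) := by
    rw [inv_rpow hn'.le, ← rpow_neg hn'.le, neg_neg, rpow_sub_one hn'.ne']
  calc _ ≤ (n : ℝ)⁻¹ ^ (1 - α) / (1 - α) + (n : ℝ)⁻¹ ^ (-α) / n :=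
        add_le_add (integral_Ioc_zero_inv_rpow_mul_one_add_pow_le hα1 he.le)
          (integral_Ioi_inv_rpow_mul_one_add_pow_le hα0 hn he)
    _ = ((1 - α)⁻¹ + 1) * (n : ℝ) ^ (α - 1) := by rw [h_near, h_far]; ring

end Kernel

section Angle

variable {α θ : ℝ}

lemma two_mul_one_sub_cos_le_one_add_sq_sub_two_mul_cos_add_one {x : ℝ} (hx : 0 ≤ x) :
    2 * (1 - cos θ) ≤ (1 + x) ^ 2 - 2 * (1 + x) * cos θ + 1 := by
  nlinarith [sq_nonneg x, mul_nonneg hx (sub_nonneg.mpr (cos_le_one θ))]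

lemma one_div_rpow_mul_mul_one_add_pow_le {n : ℕ} {x : ℝ} (hx : 0 < x) (hθ : cos θ < 1) :
    1 / (x ^ α * ((1 + x) ^ 2 - 2 * (1 + x) * cos θ + 1) * (1 + x) ^ n)
      ≤ (2 * (1 - cos θ))⁻¹ * (x ^ α * (1 + x) ^ n)⁻¹ := by
  have hD := two_mul_one_sub_cos_le_one_add_sq_sub_two_mul_cos_add_one (θ := θ) hx.le
  rw [one_div, ← mul_inv]
  refine inv_anti₀ (mul_pos (by linarith) (by positivity)) ?_
  calc 2 * (1 - cos θ) * (x ^ α * (1 + x) ^ n)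
      ≤ ((1 + x) ^ 2 - 2 * (1 + x) * cos θ + 1) * (x ^ α * (1 + x) ^ n) := by gcongr
    _ = x ^ α * ((1 + x) ^ 2 - 2 * (1 + x) * cos θ + 1) * (1 + x) ^ n := by ring

lemma integral_Ioi_zero_one_div_rpow_mul_mul_one_add_pow_le {n : ℕ}
    (hα0 : 0 ≤ α) (hα1 : α < 1) (hn : n ≠ 0) (hθ : cos θ < 1) :
    ∫ x in Ioi 0, 1 / (x ^ α * ((1 + x) ^ 2 - 2 * (1 + x) * cos θ + 1) * (1 + x) ^ (n + 1))
      ≤ (2 * (1 - cos θ))⁻¹ * (((1 - α)⁻¹ + 1) * (n : ℝ) ^ (α - 1)) := by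
  have h1c : 0 < 1 - cos θ := by linarith
  calc _ ≤ ∫ x in Ioi 0, (2 * (1 - cos θ))⁻¹ * (x ^ α * (1 + x) ^ (n + 1))⁻¹ := by
        refine integral_mono_of_nonneg ?_
          ((integrableOn_Ioi_zero_inv_rpow_mul_one_add_pow hα0 hα1 hn).const_mul _) ?_
        · filter_upwards [ae_restrict_mem measurableSet_Ioi] with x hx
          have hD := two_mul_one_sub_cos_le_one_add_sq_sub_two_mul_cos_add_one (θ := θ) hx.le
          have : (0 : ℝ) < x := hx
          exact one_div_nonneg.mpr
            (mul_pos (mul_pos (by positivity) (by linarith)) (by positivity)).le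
        · filter_upwards [ae_restrict_mem measurableSet_Ioi] with x hx
          exact one_div_rpow_mul_mul_one_add_pow_le hx hθ
    _ ≤ _ := by
        rw [integral_const_mul]
        gcongr
        exact integral_Ioi_zero_inv_rpow_mul_one_add_pow_le hα0 hα1 hn

lemma two_mul_one_sub_cos_mul_sin_half_rpow_div (hθ0 : 0 < θ) (hθ : θ < π) :
    2 * (1 - cos θ) * (sin (θ / 2) ^ α / (sin θ * (1 - cos θ) ^ α))
      = (2 * sin (θ / 2)) ^ (1 - α) / cos (θ / 2) := by
  have hs : 0 < sin (θ / 2) := sin_pos_of_pos_of_lt_pi (by linarith) (by linarith)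
  have hc : 0 < cos (θ / 2) := cos_pos_of_mem_Ioo ⟨by linarith, by linarith⟩
  have h_cos : 1 - cos θ = 2 * sin (θ / 2) * sin (θ / 2) := by
    have h := cos_two_mul (θ / 2)
    rw [mul_div_cancel₀ θ two_ne_zero] at h
    nlinarith [sin_sq_add_cos_sq (θ / 2)]
  have h_sin : sin θ = 2 * sin (θ / 2) * cos (θ / 2) := by
    rw [← sin_two_mul, mul_div_cancel₀ θ two_ne_zero]
  rw [h_cos, h_sin, mul_rpow (by positivity) hs.le, rpow_sub (by positivity), rpow_one]
  field_simp

lemma rpow_le_pi_mul_two_mul_sin_half_rpow (hα0 : 0 ≤ α) (hα1 : α ≤ 1) (hθ0 : 0 ≤ θ)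
    (hθ : θ ≤ π) : θ ^ (1 - α) ≤ π * (2 * sin (θ / 2)) ^ (1 - α) := by
  have hs : 0 ≤ sin (θ / 2) := sin_nonneg_of_nonneg_of_le_pi (by linarith) (by linarith)
  have h_jordan : θ ≤ π * (2 * sin (θ / 2)) := by
    have h : θ / π ≤ sin (θ / 2) := by
      convert mul_le_sin (x := θ / 2) (by linarith) (by linarith) using 1
      field_simp
    rw [div_le_iff₀ pi_pos] at h
    nlinarith [pi_pos]
  calc θ ^ (1 - α) ≤ (π * (2 * sin (θ / 2))) ^ (1 - α) := by gcongr
    _ = π ^ (1 - α) * (2 * sin (θ / 2)) ^ (1 - α) := mul_rpow pi_pos.le (by positivity)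
    _ ≤ π * (2 * sin (θ / 2)) ^ (1 - α) := by
        gcongr
        exact rpow_le_self_of_one_le (by linarith [pi_gt_three]) (by linarith)

end Angle

theorem key_lemma (α : ℝ) (hα : 0 < α ∧ α < 1) :
    ∃ (K : ℝ) (M : ℕ), 0 < K ∧ ∀ m : ℕ, M ≤ m → ∀ θ : ℝ, K / m < θ → θ < π →
      (1 / π) * ∫ x in Set.Ioi (0 : ℝ),
          1 / (x ^ α * ((1 + x) ^ 2 - 2 * (1 + x) * Real.cos θ + 1) * (1 + x) ^ (m + 1))
        < Real.sin (θ / 2) ^ α / (Real.sin θ * (1 - Real.cos θ) ^ α) := by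
  obtain ⟨hα0, hα1⟩ := hα
  set C := (1 - α)⁻¹ + 1
  have hC : 0 < C := by have : 0 < (1 - α)⁻¹ := inv_pos.mpr (by linarith); positivity
  refine ⟨C ^ (1 - α)⁻¹, 1, by positivity, fun m hm θ hθK hθπ => ?_⟩
  have hm0 : (0 : ℝ) < m := by exact_mod_cast hm
  have hθ0 : 0 < θ := lt_trans (by positivity) hθK
  have hcos : cos θ < 1 := by
    rw [← cos_zero]; exact cos_lt_cos_of_nonneg_of_le_pi le_rfl hθπ.le hθ0
  have hcos2 : 0 < cos (θ / 2) := cos_pos_of_mem_Ioo ⟨by linarith, by linarith⟩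
  have hθC : C * (m : ℝ) ^ (α - 1) < θ ^ (1 - α) := by
    calc C * (m : ℝ) ^ (α - 1) = (C ^ (1 - α)⁻¹ / m) ^ (1 - α) := by
          rw [div_rpow (by positivity) hm0.le, ← rpow_mul hC.le, inv_mul_cancel₀ (by linarith),
            rpow_one, div_eq_mul_inv, ← rpow_neg_one, ← rpow_mul hm0.le, mul_neg_one, neg_sub]
      _ < θ ^ (1 - α) := by gcongr
  have h1c : 0 < 1 - cos θ := by linarith
  have hs : 0 ≤ 2 * sin (θ / 2) :=
    mul_nonneg zero_le_two (sin_nonneg_of_nonneg_of_le_pi (by linarith) (by linarith))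
  calc _ ≤ 1 / π * ((2 * (1 - cos θ))⁻¹ * (C * (m : ℝ) ^ (α - 1))) := by
        gcongr
        exact integral_Ioi_zero_one_div_rpow_mul_mul_one_add_pow_le hα0.le hα1
          (Nat.one_le_iff_ne_zero.mp hm) hcos
    _ < 1 / π * ((2 * (1 - cos θ))⁻¹ * (π * (2 * sin (θ / 2)) ^ (1 - α) / cos (θ / 2))) := by
        gcongr
        calc C * (m : ℝ) ^ (α - 1) < π * (2 * sin (θ / 2)) ^ (1 - α) :=
              hθC.trans_le (rpow_le_pi_mul_two_mul_sin_half_rpow hα0.le hα1.le hθ0.le hθπ.le)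
          _ ≤ _ := le_div_self (by positivity) hcos2 (cos_le_one _)
    _ = _ := by
        rw [mul_div_assoc, ← two_mul_one_sub_cos_mul_sin_half_rpow_div hθ0 hθπ]
        field_simp
end

section
/- Let 0 < α < 1. There exists a constant c > 0 such that for all m ≥ 1 and all θ ∈ (0, π): (sin θ (1−cos θ)^α / sin^α(θ/2)) · (1/π) ∫_0^∞ dx/(x^α((1+x)² − 2(1+x)cos θ + 1)(1+x)^{m+1}) ≤ c/(mθ)^{1−α}. -/
open Real MeasureTheory Set

private lemma quad_le_pow (m : ℕ) (hm : 1 ≤ m) {x : ℝ} (hx : 0 ≤ x) :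
    (m : ℝ) ^ 2 * x ^ 2 ≤ 4 * (1 + x) ^ (m + 1) := by
  set k := (m + 1) / 2 with hk
  have h2k : m ≤ 2 * k := by omega
  have hk1 : 2 * k ≤ m + 1 := by omega
  have hb : (0:ℝ) ≤ 1 + x := by linarith
  have h1 : (k : ℝ) * x ≤ (1 + x) ^ k := by
    have := one_add_mul_le_pow (a := x) (by linarith) k
    linarith
  have hmk : (m : ℝ) * x ≤ 2 * ((k : ℝ) * x) := by
    have : (m : ℝ) ≤ 2 * (k : ℝ) := by exact_mod_cast h2k
    nlinarith
  have h2 : ((1 + x) ^ k) ^ 2 ≤ (1 + x) ^ (m + 1) := by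
    rw [← pow_mul]
    exact pow_le_pow_right₀ (by linarith) (by omega)
  have hkx : (0:ℝ) ≤ (k : ℝ) * x := by positivity
  calc (m : ℝ) ^ 2 * x ^ 2 = ((m : ℝ) * x) ^ 2 := by ring
    _ ≤ (2 * ((k : ℝ) * x)) ^ 2 := pow_le_pow_left₀ (by positivity) hmk 2
    _ = 4 * ((k : ℝ) * x) ^ 2 := by ring
    _ ≤ 4 * ((1 + x) ^ k) ^ 2 := by
        have := pow_le_pow_left₀ hkx h1 2
        linarith
    _ ≤ 4 * (1 + x) ^ (m + 1) := by linarith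

private lemma Jfact {α : ℝ} (h0 : 0 < α) (h1 : α < 1) (m : ℕ) (hm : 1 ≤ m) :
    IntegrableOn (fun x : ℝ => x ^ (-α) * ((1 + x) ^ (m + 1))⁻¹) (Ioi 0) ∧
    ∫ x in Ioi (0:ℝ), x ^ (-α) * ((1 + x) ^ (m + 1))⁻¹
      ≤ (1 / (1 - α) + 4) * (m : ℝ) ^ (α - 1) := by
  have hm0 : (0:ℝ) < m := by exact_mod_cast hm
  set a : ℝ := ((m : ℝ))⁻¹ with ha
  have ha0 : 0 < a := by positivity
  set h : ℝ → ℝ := fun x => x ^ (-α) * ((1 + x) ^ (m + 1))⁻¹ with hh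
  have hmeas : Measurable h := by fun_prop
  have hnn : ∀ x ∈ Ioi (0:ℝ), 0 ≤ h x := by
    intro x hx
    have : (0:ℝ) < x := hx
    positivity
  -- bound on Ioc 0 a
  have hbnd1 : ∀ x ∈ Ioc (0:ℝ) a, h x ≤ x ^ (-α) := by
    intro x hx
    have hx0 : 0 < x := hx.1
    have h1x : (1:ℝ) ≤ (1 + x) ^ (m + 1) := one_le_pow₀ (by linarith)
    have hle : ((1 + x) ^ (m + 1))⁻¹ ≤ 1 := inv_le_one_of_one_le₀ h1x
    have hxr : 0 ≤ x ^ (-α) := rpow_nonneg hx0.le _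
    exact mul_le_of_le_one_right hxr hle
  have hint_rpow : IntegrableOn (fun x : ℝ => x ^ (-α)) (Ioc 0 a) := by
    have := intervalIntegral.intervalIntegrable_rpow' (a := 0) (b := a) (r := -α) (by linarith)
    rwa [intervalIntegrable_iff_integrableOn_Ioc_of_le ha0.le] at this
  have hint1 : IntegrableOn h (Ioc 0 a) := by
    apply hint_rpow.mono' hmeas.aestronglyMeasurable
    filter_upwards [ae_restrict_mem measurableSet_Ioc] with x hx
    rw [Real.norm_eq_abs, abs_of_nonneg (hnn x hx.1)]
    exact hbnd1 x hx
  -- bound on Ioi a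
  set C : ℝ := 4 * (m:ℝ) ^ α / (m:ℝ) ^ 2 with hC
  have hC0 : 0 ≤ C := by positivity
  have hbnd2 : ∀ x ∈ Ioi a, h x ≤ C * x ^ (-2:ℝ) := by
    intro x hx
    have hx0 : 0 < x := lt_trans ha0 hx
    have hx2 : x ^ (-2:ℝ) = (x^2)⁻¹ := by
      rw [show (-2:ℝ) = ((-2:ℤ):ℝ) by norm_num, Real.rpow_intCast, zpow_neg, zpow_two, sq]
    have hA : x ^ (-α) ≤ (m:ℝ) ^ α := by
      calc x ^ (-α) ≤ a ^ (-α) :=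
            Real.rpow_le_rpow_of_nonpos ha0 (le_of_lt hx) (by linarith : -α ≤ 0)
        _ = (m:ℝ) ^ α := by
            rw [ha, ← Real.rpow_neg_one (m:ℝ), ← Real.rpow_mul hm0.le]
            norm_num
    have hB : ((1 + x) ^ (m + 1))⁻¹ ≤ 4 / ((m:ℝ) ^ 2 * x ^ 2) := by
      have hq := quad_le_pow m hm hx0.le
      have h4 : (0:ℝ) < (m:ℝ)^2 * x^2 / 4 := by positivity
      calc ((1 + x) ^ (m + 1))⁻¹ ≤ ((m:ℝ)^2 * x^2 / 4)⁻¹ := inv_anti₀ h4 (by linarith)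
        _ = 4 / ((m:ℝ) ^ 2 * x ^ 2) := by rw [inv_div]
    calc h x ≤ (m:ℝ) ^ α * (4 / ((m:ℝ) ^ 2 * x ^ 2)) :=
          mul_le_mul hA hB (by positivity) (by positivity)
      _ = C * x ^ (-2:ℝ) := by
          rw [hx2, hC]
          field_simp
  have hint_g2 : IntegrableOn (fun x : ℝ => C * x ^ (-2:ℝ)) (Ioi a) := by
    exact (integrableOn_Ioi_rpow_of_lt (by norm_num) ha0).const_mul C
  have hint2 : IntegrableOn h (Ioi a) := by
    apply hint_g2.mono' hmeas.aestronglyMeasurable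
    filter_upwards [ae_restrict_mem measurableSet_Ioi] with x hx
    rw [Real.norm_eq_abs, abs_of_nonneg (hnn x (lt_trans ha0 hx))]
    exact hbnd2 x hx
  have hunion : Ioc (0:ℝ) a ∪ Ioi a = Ioi 0 := Ioc_union_Ioi_eq_Ioi ha0.le
  have hintall : IntegrableOn h (Ioi 0) := by
    rw [← hunion]; exact hint1.union hint2
  refine ⟨hintall, ?_⟩
  have hsplit : ∫ x in Ioi (0:ℝ), h x = (∫ x in Ioc 0 a, h x) + ∫ x in Ioi a, h x := by
    rw [← hunion, setIntegral_union (Ioc_disjoint_Ioi le_rfl) measurableSet_Ioi hint1 hint2]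
  have hP1 : ∫ x in Ioc (0:ℝ) a, h x ≤ 1 / (1 - α) * (m:ℝ) ^ (α - 1) := by
    have step : ∫ x in Ioc (0:ℝ) a, h x ≤ ∫ x in Ioc (0:ℝ) a, x ^ (-α) :=
      setIntegral_mono_on hint1 hint_rpow measurableSet_Ioc hbnd1
    have hval : ∫ x in Ioc (0:ℝ) a, x ^ (-α) = 1 / (1 - α) * (m:ℝ) ^ (α - 1) := by
      rw [← intervalIntegral.integral_of_le ha0.le,
        integral_rpow (Or.inl (by linarith))]
      rw [Real.zero_rpow (by linarith : -α + 1 ≠ 0)]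
      have : a ^ (-α + 1) = (m:ℝ) ^ (α - 1) := by
        rw [ha, ← Real.rpow_neg_one (m:ℝ), ← Real.rpow_mul hm0.le]
        ring_nf
      rw [this]
      field_simp
      ring
    linarith [step, hval.le]
  have hP2 : ∫ x in Ioi a, h x ≤ 4 * (m:ℝ) ^ (α - 1) := by
    have step : ∫ x in Ioi a, h x ≤ ∫ x in Ioi a, C * x ^ (-2:ℝ) :=
      setIntegral_mono_on hint2 hint_g2 measurableSet_Ioi hbnd2
    have hval : ∫ x in Ioi a, C * x ^ (-2:ℝ) = C * (m:ℝ) := by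
      rw [integral_const_mul, integral_Ioi_rpow_of_lt (by norm_num) ha0]
      norm_num
      rw [ha, ← Real.rpow_neg_one (m:ℝ), ← Real.rpow_mul hm0.le]
      norm_num
    have hCm : C * (m:ℝ) = 4 * (m:ℝ) ^ (α - 1) := by
      rw [hC, Real.rpow_sub hm0, Real.rpow_one]
      field_simp
    calc ∫ x in Ioi a, h x ≤ C * (m:ℝ) := by rw [← hval]; exact step
      _ = 4 * (m:ℝ) ^ (α - 1) := hCm
  calc ∫ x in Ioi (0:ℝ), h x = (∫ x in Ioc 0 a, h x) + ∫ x in Ioi a, h x := hsplit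
    _ ≤ 1 / (1 - α) * (m:ℝ) ^ (α - 1) + 4 * (m:ℝ) ^ (α - 1) := add_le_add hP1 hP2
    _ = (1 / (1 - α) + 4) * (m : ℝ) ^ (α - 1) := by ring

private lemma key_lemma_s18 {α s co : ℝ} (h0 : 0 < α) (h1 : α < 1) (hs : 0 < s)
    (hco1 : co ≤ 1) (hco0 : 0 ≤ co) :
    2 * s * co * (2 * s ^ 2) ^ α / s ^ α * (2 * (2 * s ^ 2))⁻¹ ≤ s ^ (α - 1) := by
  have hu : 0 < s ^ α := Real.rpow_pos_of_pos hs α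
  have hsq : ((s ^ 2 : ℝ)) ^ α = s ^ α * s ^ α := by
    rw [← Real.rpow_natCast s 2, ← Real.rpow_mul hs.le, ← Real.rpow_add hs]
    norm_num
    congr 1
    ring
  have hpowcos : (2 * s ^ 2 : ℝ) ^ α = 2 ^ α * (s ^ α * s ^ α) := by
    rw [Real.mul_rpow (by norm_num) (sq_nonneg s), hsq]
  have h2a : (2:ℝ) ^ α ≤ 2 := by
    calc (2:ℝ) ^ α ≤ 2 ^ (1:ℝ) := Real.rpow_le_rpow_of_exponent_le one_le_two h1.le
      _ = 2 := Real.rpow_one 2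
  have h2a0 : (0:ℝ) ≤ 2 ^ α := by positivity
  have e1 : 2 * s * co * (2 * s ^ 2) ^ α / s ^ α * (2 * (2 * s ^ 2))⁻¹
      = 2 ^ α * co * s ^ α / (2 * s) := by
    rw [hpowcos]
    field_simp
  have e2 : s ^ (α - 1) = s ^ α / s := by
    rw [Real.rpow_sub hs, Real.rpow_one]
  rw [e1, e2, div_le_div_iff₀ (by positivity) hs]
  nlinarith [mul_pos hu hs, mul_le_mul_of_nonneg_left hco1 h2a0]

theorem fraction_bound (α : ℝ) (hα : 0 < α ∧ α < 1) :
    ∃ c : ℝ, 0 < c ∧ ∀ m : ℕ, 1 ≤ m → ∀ θ : ℝ, θ ∈ Set.Ioo 0 π →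
      (Real.sin θ * (1 - Real.cos θ) ^ α / Real.sin (θ / 2) ^ α) *
        ((1 / π) * ∫ x in Set.Ioi (0 : ℝ),
          1 / (x ^ α * ((1 + x) ^ 2 - 2 * (1 + x) * Real.cos θ + 1) * (1 + x) ^ (m + 1)))
      ≤ c / ((m : ℝ) * θ) ^ (1 - α) := by
  obtain ⟨h0, h1⟩ := hα
  have h1α : (0:ℝ) < 1 - α := by linarith
  set K : ℝ := 1 / (1 - α) + 4 with hK
  have hK0 : 0 < K := by positivity
  refine ⟨K, hK0, ?_⟩
  intro m hm θ hθ
  obtain ⟨hθ0, hθπ⟩ := hθ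
  have hm0 : (0:ℝ) < m := by exact_mod_cast hm
  set s : ℝ := Real.sin (θ / 2) with hsdef
  set co : ℝ := Real.cos (θ / 2) with hcodef
  have hs : 0 < s := Real.sin_pos_of_pos_of_lt_pi (by linarith) (by linarith [Real.pi_pos])
  have hco1 : co ≤ 1 := Real.cos_le_one _
  have hco0 : 0 ≤ co := Real.cos_nonneg_of_mem_Icc
    ⟨by linarith [Real.pi_pos], by linarith⟩
  have hhalf : 2 * (θ / 2) = θ := by ring
  have hcos : 1 - Real.cos θ = 2 * s ^ 2 := by
    have := Real.sin_sq_eq_half_sub (θ / 2)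
    rw [hhalf] at this
    linarith
  have hsin : Real.sin θ = 2 * s * co := by
    have := Real.sin_two_mul (θ / 2)
    rw [hhalf] at this
    linarith
  have hcosθ : 0 < 1 - Real.cos θ := by rw [hcos]; positivity
  set c0 : ℝ := (2 * (1 - Real.cos θ))⁻¹ with hc0
  have hc00 : 0 ≤ c0 := by positivity
  obtain ⟨hgint, hJ⟩ := Jfact h0 h1 m hm
  set J : ℝ := ∫ x in Ioi (0:ℝ), x ^ (-α) * ((1 + x) ^ (m + 1))⁻¹ with hJdef
  set f : ℝ → ℝ := fun x =>
    1 / (x ^ α * ((1 + x) ^ 2 - 2 * (1 + x) * Real.cos θ + 1) * (1 + x) ^ (m + 1)) with hf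
  -- pointwise facts
  have hD : ∀ x : ℝ, 0 < x →
      2 * (1 - Real.cos θ) ≤ (1 + x) ^ 2 - 2 * (1 + x) * Real.cos θ + 1 := by
    intro x hx
    nlinarith [Real.cos_le_one θ, sq_nonneg x]
  have hgint' : IntegrableOn (fun x : ℝ => c0 * (x ^ (-α) * ((1 + x) ^ (m + 1))⁻¹)) (Ioi 0) :=
    hgint.const_mul c0
  have hfnn : 0 ≤ᵐ[volume.restrict (Ioi 0)] f := by
    filter_upwards [ae_restrict_mem measurableSet_Ioi] with x hx
    have hx0 : (0:ℝ) < x := hx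
    have hDx : 0 < (1 + x) ^ 2 - 2 * (1 + x) * Real.cos θ + 1 :=
      lt_of_lt_of_le (by positivity) (hD x hx0)
    have : 0 < x ^ α * ((1 + x) ^ 2 - 2 * (1 + x) * Real.cos θ + 1) * (1 + x) ^ (m + 1) := by
      apply mul_pos (mul_pos (Real.rpow_pos_of_pos hx0 α) hDx) (by positivity)
    exact le_of_lt (by rw [hf]; exact div_pos one_pos this)
  have hfg : f ≤ᵐ[volume.restrict (Ioi 0)]
      fun x => c0 * (x ^ (-α) * ((1 + x) ^ (m + 1))⁻¹) := by
    filter_upwards [ae_restrict_mem measurableSet_Ioi] with x hx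
    have hx0 : (0:ℝ) < x := hx
    have hDx : 0 < (1 + x) ^ 2 - 2 * (1 + x) * Real.cos θ + 1 :=
      lt_of_lt_of_le (by positivity) (hD x hx0)
    have hxa : 0 < x ^ α := Real.rpow_pos_of_pos hx0 α
    have hP : (0:ℝ) < (1 + x) ^ (m + 1) := by positivity
    have hinv : ((1 + x) ^ 2 - 2 * (1 + x) * Real.cos θ + 1)⁻¹ ≤ c0 :=
      inv_anti₀ (by positivity) (hD x hx0)
    have heq : f x = (x ^ α)⁻¹ *
        ((1 + x) ^ 2 - 2 * (1 + x) * Real.cos θ + 1)⁻¹ * ((1 + x) ^ (m + 1))⁻¹ := by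
      simp only [hf, one_div, mul_inv]
    rw [heq]
    calc (x ^ α)⁻¹ * ((1 + x) ^ 2 - 2 * (1 + x) * Real.cos θ + 1)⁻¹ * ((1 + x) ^ (m + 1))⁻¹
        ≤ (x ^ α)⁻¹ * c0 * ((1 + x) ^ (m + 1))⁻¹ := by
          apply mul_le_mul_of_nonneg_right _ (by positivity)
          exact mul_le_mul_of_nonneg_left hinv (by positivity)
      _ = c0 * (x ^ (-α) * ((1 + x) ^ (m + 1))⁻¹) := by
          rw [Real.rpow_neg hx0.le]
          ring
  have hI : (∫ x in Ioi (0:ℝ), f x) ≤ c0 * J := by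
    have := integral_mono_of_nonneg hfnn hgint' hfg
    rwa [integral_const_mul] at this
  -- prefactor bound
  set A : ℝ := Real.sin θ * (1 - Real.cos θ) ^ α / s ^ α with hA
  have hu : 0 < s ^ α := Real.rpow_pos_of_pos hs α
  have hA0 : 0 ≤ A := by
    rw [hA]
    have hsinθ : 0 ≤ Real.sin θ := Real.sin_nonneg_of_nonneg_of_le_pi hθ0.le hθπ.le
    have : (0:ℝ) ≤ (1 - Real.cos θ) ^ α := Real.rpow_nonneg hcosθ.le _
    positivity
  have hsq : ((s ^ 2 : ℝ)) ^ α = s ^ α * s ^ α := by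
    rw [← Real.rpow_natCast s 2, ← Real.rpow_mul hs.le, ← Real.rpow_add hs]
    norm_num
    congr 1
    ring
  have hpowcos : (1 - Real.cos θ) ^ α = 2 ^ α * (s ^ α * s ^ α) := by
    rw [hcos, Real.mul_rpow (by norm_num) (sq_nonneg s), hsq]
  have h2a : (2:ℝ) ^ α ≤ 2 := by
    calc (2:ℝ) ^ α ≤ 2 ^ (1:ℝ) := Real.rpow_le_rpow_of_exponent_le one_le_two h1.le
      _ = 2 := Real.rpow_one 2
  have h2a0 : (0:ℝ) ≤ 2 ^ α := by positivity
  have key : A * c0 ≤ s ^ (α - 1) := by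
    rw [hA, hc0, hcos, hsin]
    exact key_lemma_s18 h0 h1 hs hco1 hco0
  have hsθ : θ / π ≤ s := by
    have := Real.mul_le_sin (x := θ / 2) (by linarith) (by linarith)
    have e : 2 / π * (θ / 2) = θ / π := by
      field_simp
    rw [e] at this
    exact this
  have hθπ0 : 0 < θ / π := div_pos hθ0 Real.pi_pos
  have hs1 : s ^ (α - 1) ≤ (θ / π) ^ (α - 1) :=
    Real.rpow_le_rpow_of_nonpos hθπ0 hsθ (by linarith)
  have hfrac : (1 / π) * (θ / π) ^ (α - 1) ≤ θ ^ (α - 1) := by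
    rw [Real.div_rpow hθ0.le Real.pi_pos.le]
    rw [div_mul_eq_mul_div, one_mul, div_div]
    apply div_le_self (Real.rpow_nonneg hθ0.le _)
    have : π ^ (α - 1) * π = π ^ α := by
      rw [← Real.rpow_add_one Real.pi_ne_zero]
      norm_num
    rw [this]
    exact Real.one_le_rpow (by linarith [Real.pi_gt_three]) h0.le
  -- assemble
  set M : ℝ := (m:ℝ) ^ (α - 1) with hM
  have hM0 : 0 ≤ M := Real.rpow_nonneg hm0.le _
  have hmθ : 0 < (m:ℝ) * θ := mul_pos hm0 hθ0
  have final : A * ((1 / π) * (∫ x in Ioi (0:ℝ), f x)) ≤ K / ((m:ℝ) * θ) ^ (1 - α) := by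
    have step1 : A * ((1 / π) * (∫ x in Ioi (0:ℝ), f x)) ≤ A * ((1 / π) * (c0 * (K * M))) := by
      apply mul_le_mul_of_nonneg_left _ hA0
      apply mul_le_mul_of_nonneg_left _ (by positivity)
      calc (∫ x in Ioi (0:ℝ), f x) ≤ c0 * J := hI
        _ ≤ c0 * (K * M) := mul_le_mul_of_nonneg_left hJ hc00
    have step2 : A * ((1 / π) * (c0 * (K * M))) = K * M * ((1 / π) * (A * c0)) := by ring
    have step3 : K * M * ((1 / π) * (A * c0)) ≤ K * M * ((1 / π) * (θ / π) ^ (α - 1)) := by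
      apply mul_le_mul_of_nonneg_left _ (by positivity)
      apply mul_le_mul_of_nonneg_left _ (by positivity)
      exact le_trans key hs1
    have step4 : K * M * ((1 / π) * (θ / π) ^ (α - 1)) ≤ K * M * θ ^ (α - 1) :=
      mul_le_mul_of_nonneg_left hfrac (by positivity)
    have step5 : K * M * θ ^ (α - 1) = K / ((m:ℝ) * θ) ^ (1 - α) := by
      rw [hM, mul_assoc, ← Real.mul_rpow hm0.le hθ0.le, div_eq_mul_inv, ← Real.rpow_neg hmθ.le]
      congr 1
      ring
    calc A * ((1 / π) * (∫ x in Ioi (0:ℝ), f x)) ≤ A * ((1 / π) * (c0 * (K * M))) := step1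
      _ = K * M * ((1 / π) * (A * c0)) := step2
      _ ≤ K * M * ((1 / π) * (θ / π) ^ (α - 1)) := step3
      _ ≤ K * M * θ ^ (α - 1) := step4
      _ = K / ((m:ℝ) * θ) ^ (1 - α) := step5
  exact final
end
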